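/- There exists a finite single-player perception game in which the utility is lower semicontinuous (but not continuous) in the perception argument and which has no perception equilibrium. Concretely: T = {ℓ, r}, β uniform, A = {L, R}, base utility 1 if the action matches the type and 0 otherwise, with additional disutility −2 for both types when p = 1/2, additional disutility −2 for type r when p = 1, and additional disutility −2 for type ℓ when p = 0 (where p denotes the perceived probability of type r). This game admits no perception equilibrium. -/

import Mathlib

open Finset

section PerceptionGame
variable {T A : Type*} [Fintype T] [Fintype A]

/-- Total probability of action `a` under prior `β` and strategy `σ`. -/
def actProb (β : T → ℝ) (σ : T → A → ℝ) (a : A) : ℝ := ∑ t, β t * σ t a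

/-- Bayesian consistency of a perception with the prior and strategy. -/
def Consistent (β : T → ℝ) (σ : T → A → ℝ) (τ : T → A → T → ℝ) : Prop :=
  ∀ a, 0 < actProb β σ a → ∀ t tb, τ t a tb = β tb * σ tb a / actProb β σ a

/-- Expected utility of type `t` playing mixed action `s`, given perception `τ`. -/
def ExpUtil (u : T → A → (T → ℝ) → ℝ) (τ : T → A → T → ℝ) (t : T) (s : A → ℝ) : ℝ :=
  ∑ a, s a * u t a (τ t a)

/-- Perception equilibrium: a consistent strategy–perception pair where
every type's strategy is a best reply. -/
def PerceptionEqm (β : T → ℝ) (u : T → A → (T → ℝ) → ℝ)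
    (σ : T → A → ℝ) (τ : T → A → T → ℝ) : Prop :=
  (∀ t, σ t ∈ stdSimplex ℝ A) ∧ (∀ t a, τ t a ∈ stdSimplex ℝ T) ∧
  Consistent β σ τ ∧
  ∀ t, ∀ s ∈ stdSimplex ℝ A, ExpUtil u τ t s ≤ ExpUtil u τ t (σ t)

end PerceptionGame

/-- Disutility terms: `true = ℓ`, `false = r`; `p` is the perceived probability
of type `r`. -/
noncomputable def dDis (t : Bool) (p : ℝ) : ℝ :=
  if t then (if p = 1/2 ∨ p = 0 then -2 else 0)
  else (if p = 1/2 ∨ p = 1 then -2 else 0)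

/-- Discontinuous variant of Alice's game: actions `true = L`, `false = R`. -/
noncomputable def discU (t a : Bool) (μ : Bool → ℝ) : ℝ :=
  (if t = a then 1 else 0) + dDis t (μ false)

/-! Each disutility is `-2` on a finite, hence closed, set and `0` elsewhere, which gives lower
semicontinuity, and its jump at `p = 1/2` breaks continuity. For equilibrium, the payoffs of a
type for its two actions always differ by an odd integer, so every best reply is pure; in each of
the four pure profiles the perceptions forced by Bayesian consistency leave some type a strictly
profitable deviation. -/

open Filter Topology

section BestReply
variable {T A : Type*} [Fintype A] [DecidableEq A]
  {u : T → A → (T → ℝ) → ℝ} {τ : T → A → T → ℝ} {t : T} {s : A → ℝ}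

@[simp]
lemma expUtil_single (a : A) : ExpUtil u τ t (Pi.single a 1) = u t a (τ t a) := by
  simp [ExpUtil, Pi.single_apply]

lemma eq_zero_of_bestReply_of_lt (hs : s ∈ stdSimplex ℝ A)
    (hbr : ∀ s' ∈ stdSimplex ℝ A, ExpUtil u τ t s' ≤ ExpUtil u τ t s) {a b : A}
    (hab : u t a (τ t a) < u t b (τ t b)) : s a = 0 := by
  by_contra hne
  have hpure : ∀ c, u t c (τ t c) ≤ ExpUtil u τ t s := fun c => by
    simpa using hbr _ (single_mem_stdSimplex ℝ c)
  have : ExpUtil u τ t s < ExpUtil u τ t s :=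
    calc ExpUtil u τ t s = ∑ c, s c * u t c (τ t c) := rfl
      _ < ∑ c, s c * ExpUtil u τ t s :=
        Finset.sum_lt_sum (fun c _ => mul_le_mul_of_nonneg_left (hpure c) (hs.1 c))
          ⟨a, Finset.mem_univ a, mul_lt_mul_of_pos_left (hab.trans_le (hpure b))
            (lt_of_le_of_ne (hs.1 a) (Ne.symm hne))⟩
      _ = ExpUtil u τ t s := by rw [← Finset.sum_mul, hs.2, one_mul]
  exact this.false

lemma exists_eq_single_of_bestReply [Nonempty A] (hs : s ∈ stdSimplex ℝ A)
    (hbr : ∀ s' ∈ stdSimplex ℝ A, ExpUtil u τ t s' ≤ ExpUtil u τ t s)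
    (hinj : Function.Injective fun a => u t a (τ t a)) : ∃ b, s = Pi.single b 1 := by
  obtain ⟨b, hb⟩ := Finite.exists_max fun a => u t a (τ t a)
  have hzero : ∀ a ≠ b, s a = 0 := fun a hab =>
    eq_zero_of_bestReply_of_lt hs hbr (lt_of_le_of_ne (hb a) (hinj.ne hab))
  have hsb : s b = 1 := by
    rw [← hs.2, Finset.sum_eq_single b (fun a _ hab => hzero a hab) (by simp)]
  refine ⟨b, funext fun a => ?_⟩
  by_cases hab : a = b
  · subst hab; simp [hsb]
  · simp [hzero a hab, hab]

end BestReply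

lemma lowerSemicontinuous_dDis (t : Bool) : LowerSemicontinuous (dDis t) := by
  have hdDis : dDis t = Set.indicator (if t then {1/2, 0} else {1/2, 1}) fun _ => -2 := by
    funext p; cases t <;> simp [dDis, Set.indicator]
  rw [hdDis]
  refine IsClosed.lowerSemicontinuous_indicator ?_ (by norm_num)
  cases t <;> simp only [Bool.false_eq_true, ↓reduceIte] <;> exact (Set.toFinite _).isClosed

lemma lowerSemicontinuous_discU (t a : Bool) : LowerSemicontinuous (discU t a) :=
  lowerSemicontinuous_const.add ((lowerSemicontinuous_dDis t).comp (continuous_apply false))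

lemma not_continuousAt_dDis_half (t : Bool) : ¬ ContinuousAt (dDis t) (1/2) := by
  intro h
  have hzero : Tendsto (dDis t) (𝓝[<] (1/2)) (𝓝 0) := by
    refine tendsto_const_nhds.congr' ?_
    filter_upwards [Ioo_mem_nhdsLT (show (0 : ℝ) < 1/2 by norm_num)] with p hp
    cases t <;> simp only [dDis, Bool.false_eq_true, ↓reduceIte] <;>
      refine (if_neg ?_).symm <;> rintro (h | h) <;> linarith [hp.1, hp.2]
  have := tendsto_nhds_unique (h.tendsto.mono_left nhdsWithin_le_nhds) hzero
  cases t <;> norm_num [dDis] at this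

def simplexPoint (p : ℝ) : Bool → ℝ := fun b => if b then 1 - p else p

lemma continuous_simplexPoint : Continuous simplexPoint :=
  continuous_pi fun b => by
    cases b <;> simp only [simplexPoint, Bool.false_eq_true, ↓reduceIte] <;> fun_prop

lemma simplexPoint_mem_stdSimplex {p : ℝ} (hp : p ∈ Set.Icc 0 1) :
    simplexPoint p ∈ stdSimplex ℝ Bool :=
  ⟨fun b => by cases b <;> simp [simplexPoint, hp.1, hp.2], by simp [simplexPoint]⟩

lemma not_continuousOn_discU (t a : Bool) : ¬ ContinuousOn (discU t a) (stdSimplex ℝ Bool) := by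
  intro h
  have hcomp : ContinuousAt (discU t a ∘ simplexPoint) (1/2) :=
    (h.comp continuous_simplexPoint.continuousOn fun _ => simplexPoint_mem_stdSimplex).continuousAt
      (Icc_mem_nhds (by norm_num) (by norm_num))
  have hdDis : dDis t = fun p => discU t a (simplexPoint p) - if t = a then 1 else 0 := by
    funext p; simp [discU, simplexPoint]
  exact not_continuousAt_dDis_half t (hdDis ▸ hcomp.sub continuousAt_const)

-- The matching action pays `1` or `-1`, the other one `0` or `-2`.
lemma discU_true_ne_false (t : Bool) (μ ν : Bool → ℝ) : discU t true μ ≠ discU t false ν := by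
  cases t <;> simp only [discU, dDis, Bool.false_eq_true, ↓reduceIte] <;> split_ifs <;>
    norm_num at *

lemma injective_discU (t : Bool) (τ : Bool → Bool → Bool → ℝ) :
    Function.Injective fun a => discU t a (τ t a) := by
  intro a b hab
  cases a <;> cases b
  all_goals first
    | rfl
    | exact absurd hab (discU_true_ne_false t _ _)
    | exact absurd hab.symm (discU_true_ne_false t _ _)

lemma neg_two_le_dDis (t : Bool) (p : ℝ) : -2 ≤ dDis t p := by
  unfold dDis; split_ifs <;> norm_num

lemma perception_eq_of_pure {f : Bool → Bool} {τ : Bool → Bool → Bool → ℝ}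
    (hc : Consistent (fun _ => 1/2) (fun t => Pi.single (f t) 1) τ) {a t₀ : Bool}
    (ht₀ : f t₀ = a) (t : Bool) :
    τ t a false = (if f false = a then 1 else 0) /
      ((if f true = a then 1 else 0) + if f false = a then 1 else 0) := by
  have hpos : 0 < actProb (fun _ => (1 : ℝ) / 2) (fun t => Pi.single (f t) 1) a := by
    cases t₀ <;> simp only [actProb, Fintype.sum_bool, Pi.single_apply, ht₀] <;> split_ifs <;>
      norm_num
  rw [hc a hpos t false]
  simp only [actProb, Fintype.sum_bool, Pi.single_apply, eq_comm (a := a)]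
  split_ifs <;> norm_num

-- Pooling makes the on-path perception `1/2`; separating makes the two perceptions `0` and `1`.
lemma exists_discU_lt_of_consistent (f : Bool → Bool) (τ : Bool → Bool → Bool → ℝ)
    (hc : Consistent (fun _ => 1/2) (fun t => Pi.single (f t) 1) τ) :
    ∃ t b, discU t (f t) (τ t (f t)) < discU t b (τ t b) := by
  cases hℓ : f true <;> cases hr : f false
  · have hR := perception_eq_of_pure hc hℓ true
    simp only [hℓ, hr, ↓reduceIte] at hR
    have hpool : dDis true (τ true false false) = -2 := by norm_num [hR, dDis]
    refine ⟨true, true, ?_⟩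
    norm_num [discU, hℓ]
    linarith [neg_two_le_dDis true (τ true true false)]
  · have hL := perception_eq_of_pure hc hr true
    have hR := perception_eq_of_pure hc hℓ true
    simp only [hℓ, hr, ↓reduceIte] at hL hR
    refine ⟨true, true, ?_⟩
    norm_num [discU, hℓ, hL, hR, dDis]
  · have hL := perception_eq_of_pure hc hℓ true
    have hR := perception_eq_of_pure hc hr true
    simp only [hℓ, hr, ↓reduceIte] at hL hR
    refine ⟨true, false, ?_⟩
    norm_num [discU, hℓ, hL, hR, dDis]
  · have hL := perception_eq_of_pure hc hr false
    simp only [hℓ, hr, ↓reduceIte] at hL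
    have hpool : dDis false (τ false true false) = -2 := by norm_num [hL, dDis]
    refine ⟨false, false, ?_⟩
    norm_num [discU, hr]
    linarith [neg_two_le_dDis false (τ false false false)]

/-- a game with lower-semicontinuous (but not continuous) utility
and no perception equilibrium. -/
theorem lsc_no_equilibrium :
    (∀ t a, LowerSemicontinuousOn (discU t a) (stdSimplex ℝ Bool)) ∧
    ¬ (∀ t a, ContinuousOn (discU t a) (stdSimplex ℝ Bool)) ∧
    ¬ ∃ (σ : Bool → Bool → ℝ) (τ : Bool → Bool → Bool → ℝ),
        PerceptionEqm (fun _ => 1/2) discU σ τ := by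
  refine ⟨fun t a => (lowerSemicontinuous_discU t a).lowerSemicontinuousOn _,
    fun h => not_continuousOn_discU false false (h false false), ?_⟩
  rintro ⟨σ, τ, hσ, -, hc, hbr⟩
  choose f hf using fun t => exists_eq_single_of_bestReply (hσ t) (hbr t) (injective_discU t τ)
  obtain rfl : σ = fun t => Pi.single (f t) 1 := funext hf
  obtain ⟨t, b, hlt⟩ := exists_discU_lt_of_consistent f τ hc
  have := hbr t (Pi.single b 1) (single_mem_stdSimplex ℝ b)
  simp only [expUtil_single] at this
  linarith
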